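/- arXiv:1902.04796 — 2 statements merged into one kernel-verified Lean document; each statement's English description precedes it below -/
import Mathlib

section
/- Fix s' ∈ (s₀, s₁) and i > p. Then for every s ∈ (s', s₁), the function s ↦ G⁺_{ij}(s, s') is differentiable and satisfies i·∂_s G⁺_{ij}(s, s') = ż(s)·Σ_{k=1}^d h_{ik}(s) G⁺_{kj}(s, s') for all j = 1,…,d. -/
/-!
Differentiating `Tr[U(s₁,s) a_i U(s,s') a_j† U(s',s₀)]` in `s` produces, from the two
evolution equations, the commutator `[Ĥ(s), a_i]` sandwiched between the evolution operators. Since `i` lies outside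
the fragment, `Û(s)` commutes with `a_i`, and the canonical anticommutation relations give
`[a_i, a_k† a_l] = δ_{ik} a_l`, so `[a_i, Ĥ(s)] = Σ_l h_{il}(s) a_l`. The trace is a continuous
linear functional, so it commutes with the derivative.
-/

open ContinuousLinearMap

namespace CAR

variable {ι 𝕜 R : Type*} [DecidableEq ι] [CommSemiring 𝕜] [Ring R] [Algebra 𝕜 R]
  {a b : ι → R}

theorem commutator_hopping (hanti : ∀ i j, a i * a j + a j * a i = 0)
    (hmixed : ∀ i j, a i * b j + b j * a i = if i = j then 1 else 0) (i k l : ι) :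
    a i * (b k * a l) - b k * a l * a i = if i = k then a l else 0 := by
  have hal : a l * a i = -(a i * a l) := eq_neg_of_add_eq_zero_left (hanti l i)
  have hab : a i * b k = (if i = k then 1 else 0) - b k * a i := eq_sub_of_add_eq (hmixed i k)
  calc a i * (b k * a l) - b k * a l * a i
      = a i * b k * a l - b k * (a l * a i) := by simp only [mul_assoc]
    _ = if i = k then a l else 0 := by
      rw [hal, hab]
      split_ifs <;> noncomm_ring

theorem commutator_quadratic_add [Fintype ι] (hanti : ∀ i j, a i * a j + a j * a i = 0)
    (hmixed : ∀ i j, a i * b j + b j * a i = if i = j then 1 else 0) (h : Matrix ι ι 𝕜)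
    {W : R} {i : ι} (hW : Commute W (a i)) :
    a i * ((∑ k, ∑ l, h k l • (b k * a l)) + W) -
        ((∑ k, ∑ l, h k l • (b k * a l)) + W) * a i = ∑ l, h i l • a l := by
  rw [mul_add, add_mul, hW.eq, add_sub_add_right_eq_sub]
  simp only [Finset.mul_sum, Finset.sum_mul, ← Finset.sum_sub_distrib, mul_smul_comm,
    smul_mul_assoc, ← smul_sub, commutator_hopping hanti hmixed, smul_ite, smul_zero]
  simp

end CAR

theorem HasDerivAt.mul_mul_of_generator {R : Type*} [NormedRing R] [NormedAlgebra ℝ R]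
    {f g : ℝ → R} {K : R} {s : ℝ} (hf : HasDerivAt f (f s * K) s)
    (hg : HasDerivAt g (-(K * g s)) s) (A : R) :
    HasDerivAt (fun t => f t * A * g t) (f s * (K * A - A * K) * g s) s :=
  ((hf.mul_const A).mul hg).congr_deriv (by noncomm_ring)

theorem HasDerivAt.trace_clm {V : Type*} [NormedAddCommGroup V] [NormedSpace ℂ V]
    [FiniteDimensional ℂ V] {f : ℝ → V →L[ℂ] V} {f' : V →L[ℂ] V} {s : ℝ}
    (hf : HasDerivAt f f' s) :
    HasDerivAt (fun t => LinearMap.trace ℂ V (f t)) (LinearMap.trace ℂ V f') s := by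
  let τ : (V →L[ℂ] V) →L[ℂ] ℂ :=
    LinearMap.toContinuousLinearMap (LinearMap.trace ℂ V ∘ₗ ContinuousLinearMap.coeLM ℂ)
  exact (τ.restrictScalars ℝ).hasFDerivAt.comp_hasDerivAt s hf

theorem noneq_greater_green_deriv_first_var_general
    (d p : ℕ) (V : Type*) [NormedAddCommGroup V] [InnerProductSpace ℂ V]
    [FiniteDimensional ℂ V]
    (a : Fin d → (V →L[ℂ] V))
    (hcar1 : ∀ i j : Fin d, a i * a j + a j * a i = 0)
    (hcar2 : ∀ i j : Fin d,
      a i * adjoint (a j) + adjoint (a j) * a i = if i = j then 1 else 0)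
    (s₀ s₁ : ℝ) (hs : s₀ < s₁)
    (zdot : ℝ → ℂ)
    (h : ℝ → Matrix (Fin d) (Fin d) ℂ)
    (Uop : ℝ → (V →L[ℂ] V))
    (hUcomm : ∀ s : ℝ, ∀ j : Fin d, p ≤ (j : ℕ) →
      Uop s * a j = a j * Uop s ∧ Uop s * adjoint (a j) = adjoint (a j) * Uop s)
    (H : ℝ → (V →L[ℂ] V))
    (hHdef : ∀ s : ℝ, H s = (∑ i, ∑ j, h s i j • (adjoint (a i) * a j)) + Uop s)
    (U : ℝ → ℝ → (V →L[ℂ] V))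
    (hUder1 : ∀ s' ∈ Set.Icc s₀ s₁, ∀ s ∈ Set.Ioo s₀ s₁,
      HasDerivAt (fun t => U t s') ((-Complex.I * zdot s) • (H s * U s s')) s)
    (hUder2 : ∀ s ∈ Set.Icc s₀ s₁, ∀ s' ∈ Set.Ioo s₀ s₁,
      HasDerivAt (fun t => U s t) ((Complex.I * zdot s') • (U s s' * H s')) s')
    (Z : ℂ)
    (Gp : Fin d → Fin d → ℝ → ℝ → ℂ)
    (hGpdef : ∀ i j : Fin d, ∀ s s' : ℝ, Gp i j s s' = (-Complex.I / Z) *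
      LinearMap.trace ℂ V
        ((U s₁ s * a i * U s s' * adjoint (a j) * U s' s₀ : V →L[ℂ] V) : V →ₗ[ℂ] V))
    (s' : ℝ) (hs' : s' ∈ Set.Ioo s₀ s₁)
    (i : Fin d) (hi : p ≤ (i : ℕ)) :
    ∀ s ∈ Set.Ioo s' s₁, ∀ j : Fin d,
      HasDerivAt (fun t => Gp i j t s')
        (-Complex.I * zdot s * ∑ k, h s i k * Gp k j s s') s := by
  intro s hs_mem j
  have hs_mem₀ : s ∈ Set.Ioo s₀ s₁ := ⟨hs'.1.trans hs_mem.1, hs_mem.2⟩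
  set K := (Complex.I * zdot s) • H s
  set C := adjoint (a j) * U s' s₀
  have hcomm : K * a i - a i * K = (-Complex.I * zdot s) • ∑ k, h s i k • a k := by
    rw [smul_mul_assoc, mul_smul_comm, ← smul_sub, ← neg_sub, hHdef,
      CAR.commutator_quadratic_add hcar1 hcar2 (h s) (hUcomm s i hi).1, smul_neg, ← neg_smul,
      ← neg_mul]
  have hleft : HasDerivAt (fun t => U s₁ t) (U s₁ s * K) s := by
    simpa only [K, mul_smul_comm] using hUder2 s₁ ⟨hs.le, le_rfl⟩ s hs_mem₀
  have hright : HasDerivAt (fun t => U t s' * C) (-(K * (U s s' * C))) s := by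
    simpa only [K, neg_mul, neg_smul, smul_mul_assoc, mul_assoc] using
      (hUder1 s' ⟨hs'.1.le, hs'.2.le⟩ s hs_mem₀).mul_const C
  have hGp : (fun t => Gp i j t s') = fun t =>
      -Complex.I / Z * LinearMap.trace ℂ V ((U s₁ t * a i * (U t s' * C) : V →L[ℂ] V)) := by
    funext t
    rw [hGpdef]
    simp only [C, mul_assoc]
  rw [hGp]
  refine ((hleft.mul_mul_of_generator hright (a i)).trace_clm.const_mul _).congr_deriv ?_
  simp only [hcomm, hGpdef, C, mul_assoc, smul_mul_assoc, mul_smul_comm, Finset.mul_sum,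
    Finset.sum_mul, toLinearMap_smul, toLinearMap_sum, map_smul, map_sum, smul_eq_mul]
  exact Finset.sum_congr rfl fun k _ => by ring

/-- **Differential equation in the first contour variable for the greater
Green's function (non-equilibrium fermionic case).**
For a time-dependent impurity Hamiltonian with fragment `{1,…,p}` and any row
index `i` outside the fragment, for `s' < s` the greater Green's function
satisfies `i·∂_s G⁺_{ij}(s,s') = ż(s)·Σ_k h_{ik}(s) G⁺_{kj}(s,s')`,
i.e. it is differentiable in `s` with derivative
`−i·ż(s)·Σ_k h_{ik}(s) G⁺_{kj}(s,s')`. -/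
theorem noneq_greater_green_deriv_first_var
    (d p : ℕ) (V : Type*) [NormedAddCommGroup V] [InnerProductSpace ℂ V]
    [FiniteDimensional ℂ V]
    (a : Fin d → (V →L[ℂ] V))
    (hcar1 : ∀ i j : Fin d, a i * a j + a j * a i = 0)
    (hcar2 : ∀ i j : Fin d,
      a i * adjoint (a j) + adjoint (a j) * a i = if i = j then 1 else 0)
    (s₀ s₁ : ℝ) (hs : s₀ < s₁)
    (zdot : ℝ → ℂ) (hzdot : ContinuousOn zdot (Set.Ioo s₀ s₁))
    (h : ℝ → Matrix (Fin d) (Fin d) ℂ)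
    (hhcont : ∀ i j : Fin d, ContinuousOn (fun s => h s i j) (Set.Ioo s₀ s₁))
    (hherm : ∀ s : ℝ, (h s).IsHermitian)
    (Uop : ℝ → (V →L[ℂ] V)) (hUcont : ContinuousOn Uop (Set.Ioo s₀ s₁))
    (hUcomm : ∀ s : ℝ, ∀ j : Fin d, p ≤ (j : ℕ) →
      Uop s * a j = a j * Uop s ∧ Uop s * adjoint (a j) = adjoint (a j) * Uop s)
    (H : ℝ → (V →L[ℂ] V))
    (hHdef : ∀ s : ℝ, H s = (∑ i, ∑ j, h s i j • (adjoint (a i) * a j)) + Uop s)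
    (U : ℝ → ℝ → (V →L[ℂ] V))
    (hUder1 : ∀ s' ∈ Set.Icc s₀ s₁, ∀ s ∈ Set.Ioo s₀ s₁,
      HasDerivAt (fun t => U t s') ((-Complex.I * zdot s) • (H s * U s s')) s)
    (hUder2 : ∀ s ∈ Set.Icc s₀ s₁, ∀ s' ∈ Set.Ioo s₀ s₁,
      HasDerivAt (fun t => U s t) ((Complex.I * zdot s') • (U s s' * H s')) s')
    (hUid : ∀ s ∈ Set.Icc s₀ s₁, U s s = 1)
    (hUgroup : ∀ s ∈ Set.Icc s₀ s₁, ∀ s'' ∈ Set.Icc s₀ s₁, ∀ s' ∈ Set.Icc s₀ s₁,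
      U s s'' * U s'' s' = U s s')
    (Z : ℂ) (hZdef : Z = LinearMap.trace ℂ V (U s₁ s₀ : V →ₗ[ℂ] V)) (hZ : Z ≠ 0)
    (Gp : Fin d → Fin d → ℝ → ℝ → ℂ)
    (hGpdef : ∀ i j : Fin d, ∀ s s' : ℝ, Gp i j s s' = (-Complex.I / Z) *
      LinearMap.trace ℂ V
        ((U s₁ s * a i * U s s' * adjoint (a j) * U s' s₀ : V →L[ℂ] V) : V →ₗ[ℂ] V))
    (s' : ℝ) (hs' : s' ∈ Set.Ioo s₀ s₁)
    (i : Fin d) (hi : p ≤ (i : ℕ)) :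
    ∀ s ∈ Set.Ioo s' s₁, ∀ j : Fin d,
      HasDerivAt (fun t => Gp i j t s')
        (-Complex.I * zdot s * ∑ k, h s i k * Gp k j s s') s :=
  noneq_greater_green_deriv_first_var_general d p V a hcar1 hcar2 s₀ s₁ hs zdot h Uop hUcomm H hHdef
    U hUder1 hUder2 Z Gp hGpdef s' hs' i hi
end

section
/- Fix s ∈ (s₀, s₁) and j > p. Then for every s' ∈ (s₀, s), the function s' ↦ G⁺_{ij}(s, s') is differentiable and satisfies −i·∂_{s'} G⁺_{ij}(s, s') = ż(s')·Σ_{k=1}^d G⁺_{ik}(s, s') h_{kj}(s') for all i = 1,…,d. -/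
open ContinuousLinearMap

set_option maxHeartbeats 1000000 in
/-- **Differential equation in the second contour variable for the greater
Green's function (non-equilibrium fermionic case).**
For a time-dependent impurity Hamiltonian with fragment `{1,…,p}` and any
column index `j` outside the fragment, for `s' < s` the greater Green's
function satisfies `−i·∂_{s'} G⁺_{ij}(s,s') = ż(s')·Σ_k G⁺_{ik}(s,s') h_{kj}(s')`,
i.e. it is differentiable in `s'` with derivative
`i·ż(s')·Σ_k G⁺_{ik}(s,s') h_{kj}(s')`. -/
theorem noneq_greater_green_deriv_second_var
    (d p : ℕ) (V : Type*) [NormedAddCommGroup V] [InnerProductSpace ℂ V]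
    [FiniteDimensional ℂ V]
    (a : Fin d → (V →L[ℂ] V))
    (hcar1 : ∀ i j : Fin d, a i * a j + a j * a i = 0)
    (hcar2 : ∀ i j : Fin d,
      a i * adjoint (a j) + adjoint (a j) * a i = if i = j then 1 else 0)
    (s₀ s₁ : ℝ) (hs : s₀ < s₁)
    (zdot : ℝ → ℂ) (hzdot : ContinuousOn zdot (Set.Ioo s₀ s₁))
    (h : ℝ → Matrix (Fin d) (Fin d) ℂ)
    (hhcont : ∀ i j : Fin d, ContinuousOn (fun s => h s i j) (Set.Ioo s₀ s₁))
    (hherm : ∀ s : ℝ, (h s).IsHermitian)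
    (Uop : ℝ → (V →L[ℂ] V)) (hUcont : ContinuousOn Uop (Set.Ioo s₀ s₁))
    (hUcomm : ∀ s : ℝ, ∀ j : Fin d, p ≤ (j : ℕ) →
      Uop s * a j = a j * Uop s ∧ Uop s * adjoint (a j) = adjoint (a j) * Uop s)
    (H : ℝ → (V →L[ℂ] V))
    (hHdef : ∀ s : ℝ, H s = (∑ i, ∑ j, h s i j • (adjoint (a i) * a j)) + Uop s)
    (U : ℝ → ℝ → (V →L[ℂ] V))
    (hUder1 : ∀ s' ∈ Set.Icc s₀ s₁, ∀ s ∈ Set.Ioo s₀ s₁,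
      HasDerivAt (fun t => U t s') ((-Complex.I * zdot s) • (H s * U s s')) s)
    (hUder2 : ∀ s ∈ Set.Icc s₀ s₁, ∀ s' ∈ Set.Ioo s₀ s₁,
      HasDerivAt (fun t => U s t) ((Complex.I * zdot s') • (U s s' * H s')) s')
    (hUid : ∀ s ∈ Set.Icc s₀ s₁, U s s = 1)
    (hUgroup : ∀ s ∈ Set.Icc s₀ s₁, ∀ s'' ∈ Set.Icc s₀ s₁, ∀ s' ∈ Set.Icc s₀ s₁,
      U s s'' * U s'' s' = U s s')
    (Z : ℂ) (hZdef : Z = LinearMap.trace ℂ V (U s₁ s₀ : V →ₗ[ℂ] V)) (hZ : Z ≠ 0)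
    (Gp : Fin d → Fin d → ℝ → ℝ → ℂ)
    (hGpdef : ∀ i j : Fin d, ∀ s s' : ℝ, Gp i j s s' = (-Complex.I / Z) *
      LinearMap.trace ℂ V
        ((U s₁ s * a i * U s s' * adjoint (a j) * U s' s₀ : V →L[ℂ] V) : V →ₗ[ℂ] V))
    (s : ℝ) (hsmem : s ∈ Set.Ioo s₀ s₁)
    (j : Fin d) (hj : p ≤ (j : ℕ)) :
    ∀ s' ∈ Set.Ioo s₀ s, ∀ i : Fin d,
      HasDerivAt (fun t => Gp i j s t)
        (Complex.I * zdot s' * ∑ k, Gp i k s s' * h s' k j) s' := by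
  intro s' hs' i
  obtain ⟨hs0, hs1⟩ := hsmem
  obtain ⟨hs'0, hs's⟩ := hs'
  have hs'Ioo : s' ∈ Set.Ioo s₀ s₁ := ⟨hs'0, hs's.trans hs1⟩
  have hsIcc : s ∈ Set.Icc s₀ s₁ := ⟨hs0.le, hs1.le⟩
  have hs0Icc : s₀ ∈ Set.Icc s₀ s₁ := ⟨le_refl _, hs.le⟩
  -- anticommutation of adjoints
  have hadj : ∀ k l : Fin d,
      adjoint (a k) * adjoint (a l) = -(adjoint (a l) * adjoint (a k)) := by
    intro k l
    have h0 := congrArg star (hcar1 l k)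
    simp only [star_add, star_mul, star_zero, ContinuousLinearMap.star_eq_adjoint] at h0
    exact eq_neg_of_add_eq_zero_left h0
  -- commutator term
  have term : ∀ k l : Fin d,
      adjoint (a k) * a l * adjoint (a j) - adjoint (a j) * (adjoint (a k) * a l)
        = if l = j then adjoint (a k) else 0 := by
    intro k l
    have h1 : a l * adjoint (a j)
        = (if l = j then (1 : V →L[ℂ] V) else 0) - adjoint (a j) * a l :=
      eq_sub_of_add_eq (hcar2 l j)
    have h2 : adjoint (a j) * adjoint (a k) = -(adjoint (a k) * adjoint (a j)) :=
      hadj j k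
    rw [mul_assoc, h1, ← mul_assoc (adjoint (a j)), h2]
    split_ifs with hlj
    · noncomm_ring
    · noncomm_ring
  -- key commutator identity
  have key : H s' * adjoint (a j) - adjoint (a j) * H s'
      = ∑ k, h s' k j • adjoint (a k) := by
    rw [hHdef]
    have hU2 := (hUcomm s' j hj).2
    have expand : ((∑ k, ∑ l, h s' k l • (adjoint (a k) * a l)) + Uop s') * adjoint (a j)
        - adjoint (a j) * ((∑ k, ∑ l, h s' k l • (adjoint (a k) * a l)) + Uop s')
        = ∑ k, ∑ l, h s' k l •
            (adjoint (a k) * a l * adjoint (a j) - adjoint (a j) * (adjoint (a k) * a l)) := by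
      rw [add_mul, mul_add, hU2, add_sub_add_right_eq_sub]
      rw [Finset.sum_mul, Finset.mul_sum, ← Finset.sum_sub_distrib]
      refine Finset.sum_congr rfl fun k _ => ?_
      rw [Finset.sum_mul, Finset.mul_sum, ← Finset.sum_sub_distrib]
      refine Finset.sum_congr rfl fun l _ => ?_
      rw [smul_mul_assoc, mul_smul_comm, smul_sub]
    rw [expand]
    simp only [term]
    refine Finset.sum_congr rfl fun k _ => ?_
    simp [smul_ite, Finset.sum_ite_eq']
  -- derivatives
  have hf : HasDerivAt (fun t => U s t) ((Complex.I * zdot s') • (U s s' * H s')) s' :=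
    hUder2 s hsIcc s' hs'Ioo
  have hg : HasDerivAt (fun t => U t s₀) ((-Complex.I * zdot s') • (H s' * U s' s₀)) s' :=
    hUder1 s₀ hs0Icc s' hs'Ioo
  have h1 : HasDerivAt (fun t => U s₁ s * a i * U s t)
      (U s₁ s * a i * ((Complex.I * zdot s') • (U s s' * H s'))) s' := hf.const_mul _
  have h2 := (h1.mul_const (adjoint (a j))).mul hg
  -- trace functional as a CLM
  let L : (V →L[ℂ] V) →L[ℂ] ℂ :=
    LinearMap.toContinuousLinearMap ((LinearMap.trace ℂ V).comp (ContinuousLinearMap.coeLM ℂ))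
  have hLapp : ∀ X : V →L[ℂ] V, L X = LinearMap.trace ℂ V (X : V →ₗ[ℂ] V) := fun X => rfl
  have hL2 : HasFDerivAt (⇑(L.restrictScalars ℝ)) (L.restrictScalars ℝ)
      (U s₁ s * a i * U s s' * adjoint (a j) * U s' s₀) :=
    (L.restrictScalars ℝ).hasFDerivAt
  have h3a := hL2.comp_hasDerivAt s' h2
  have h3b : HasDerivAt
      (fun t => L (U s₁ s * a i * U s t * adjoint (a j) * U t s₀))
      (L (U s₁ s * a i * ((Complex.I * zdot s') • (U s s' * H s')) * adjoint (a j) * U s' s₀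
        + U s₁ s * a i * U s s' * adjoint (a j)
          * ((-Complex.I * zdot s') • (H s' * U s' s₀)))) s' := h3a
  have h3 := h3b.const_mul (-Complex.I / Z)
  have hfun : (fun t => Gp i j s t)
      = fun t => (-Complex.I / Z) * L (U s₁ s * a i * U s t * adjoint (a j) * U t s₀) := by
    funext t; rw [hGpdef, hLapp]
  -- rewrite the derivative value
  have hDval : U s₁ s * a i * ((Complex.I * zdot s') • (U s s' * H s')) * adjoint (a j) * U s' s₀
        + U s₁ s * a i * U s s' * adjoint (a j) * ((-Complex.I * zdot s') • (H s' * U s' s₀))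
      = (Complex.I * zdot s') • ∑ k, h s' k j •
          (U s₁ s * a i * U s s' * adjoint (a k) * U s' s₀) := by
    have hc : ∑ k, h s' k j • (U s₁ s * a i * U s s' * adjoint (a k) * U s' s₀)
        = (U s₁ s * a i * U s s')
            * (H s' * adjoint (a j) - adjoint (a j) * H s') * U s' s₀ := by
      rw [key, Finset.mul_sum, Finset.sum_mul]
      refine Finset.sum_congr rfl fun k _ => ?_
      rw [mul_smul_comm, smul_mul_assoc]
    rw [hc]
    simp only [neg_mul, neg_smul, mul_neg, mul_smul_comm, smul_mul_assoc, mul_sub, sub_mul,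
      smul_sub, mul_assoc]
    abel
  have hval : Complex.I * zdot s' * ∑ k, Gp i k s s' * h s' k j
      = (-Complex.I / Z) * L
          (U s₁ s * a i * ((Complex.I * zdot s') • (U s s' * H s')) * adjoint (a j) * U s' s₀
            + U s₁ s * a i * U s s' * adjoint (a j)
              * ((-Complex.I * zdot s') • (H s' * U s' s₀))) := by
    rw [hDval, map_smul, map_sum]
    simp only [map_smul, smul_eq_mul, hLapp, hGpdef]
    simp only [Finset.mul_sum]
    refine Finset.sum_congr rfl fun k _ => ?_
    simp only [ContinuousLinearMap.coe_smul, map_smul, smul_eq_mul]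
    ring
  rw [hfun, hval]
  exact h3
end
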